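/- arXiv:1812.01671 — 5 statements merged into one kernel-verified Lean document; each statement's English description precedes it below -/
import Mathlib

section
/- There exists an absolute constant C such that for all finite sets A, B ⊆ R and every finite set L of lines y = ax + b in R² with a ≠ 0, the number of incidences satisfies I(A×B, L) ≤ C·max{ |B|^(1/2)·|L|, |B|^(1/2)·|A|^(2/3)·E(L)^(1/6)·|L|^(1/3) }. -/
/-!
Counting incidences row by row, Cauchy–Schwarz gives `I(A×B, L)² ≤ |B| Σ_y n(y)²`, where
`n(y)` is the number of lines of `L` meeting `A × {y}`; and `Σ_y n(y)²` is at most the number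
of incidences between the grid `A × A` and the lines `l₁⁻¹ ∘ l₂`, `(l₁, l₂) ∈ L²`, counted with
multiplicity. Sort these lines dyadically by richness `τ = 2ʲ`. Cutting `A × A` into `k × k`
cells, a line of nonzero slope meets at most `2k` of them, which yields a Szemerédi–Trotter
type bound: at most `2048 |A|⁴ / τ³` distinct lines are `τ`-rich. Cauchy–Schwarz over the
fibres of `(l₁, l₂) ↦ l₁⁻¹ ∘ l₂` turns this into at most `(2048 |A|⁴ E(L) / τ³)^(1/2)` pairs
at level `τ`, besides the trivial bound `|L|²`; summing the smaller of the two over all levels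
gives `Σ_y n(y)² ≲ |L|² + |A|^(4/3) E(L)^(1/3) |L|^(2/3)`.
-/

/-- Composition in `Aff(ℝ)` of lines `(a,b)`, acting as `x ↦ ax + b`:
`(a,b)∘(c,d) = (ac, ad + b)`. -/
def acomp (l m : ℝ × ℝ) : ℝ × ℝ := (l.1 * m.1, l.1 * m.2 + l.2)

/-- Inverse in `Aff(ℝ)` of a line `(a,b)` with `a ≠ 0`. -/
noncomputable def ainv (l : ℝ × ℝ) : ℝ × ℝ := (l.1⁻¹, -(l.1⁻¹ * l.2))

/-- The energy of a set of non-vertical lines regarded as elements of `Aff(ℝ)`: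
`E(L) = #{(l₁,l₂,l₁',l₂') ∈ L⁴ : l₁⁻¹∘l₂ = l₁'⁻¹∘l₂'}`. -/
noncomputable def affEnergy (L : Finset (ℝ × ℝ)) : ℕ :=
  Set.ncard {q : (ℝ × ℝ) × (ℝ × ℝ) × (ℝ × ℝ) × (ℝ × ℝ) |
    q.1 ∈ L ∧ q.2.1 ∈ L ∧ q.2.2.1 ∈ L ∧ q.2.2.2 ∈ L ∧
    acomp (ainv q.1) q.2.1 = acomp (ainv q.2.2.1) q.2.2.2}

/-- The number of incidences between the grid `A×B` and the set of lines `L`. -/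
noncomputable def inc (A B : Finset ℝ) (L : Finset (ℝ × ℝ)) : ℕ :=
  Set.ncard {ql : (ℝ × ℝ) × ℝ × ℝ |
    ql.1.1 ∈ A ∧ ql.1.2 ∈ B ∧ ql.2 ∈ L ∧ ql.1.2 = ql.2.1 * ql.1.1 + ql.2.2}

open Finset

section OrderBlocks

variable {α : Type*} [LinearOrder α]

def orderRank (A : Finset α) (x : α) : ℕ := #{z ∈ A | z < x}

def orderBlock (A : Finset α) (q i : ℕ) : Finset α := {x ∈ A | orderRank A x / q = i}

lemma orderRank_lt_card {A : Finset α} {x : α} (hx : x ∈ A) : orderRank A x < #A :=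
  card_lt_card ⟨filter_subset _ _, fun h => by simpa using h hx⟩

lemma orderRank_mono (A : Finset α) : Monotone (orderRank A) := fun _ _ hxy =>
  card_le_card fun z hz => by
    simp only [mem_filter] at hz ⊢
    exact ⟨hz.1, hz.2.trans_le hxy⟩

lemma orderRank_strictMonoOn (A : Finset α) : StrictMonoOn (orderRank A) A :=
  fun x hx _ _ hxy => card_lt_card ⟨fun z hz => by
      simp only [mem_filter] at hz ⊢
      exact ⟨hz.1, hz.2.trans hxy⟩,
    fun h => by simpa using h (mem_filter.2 ⟨hx, hxy⟩)⟩

lemma orderRank_div_lt {A : Finset α} {q k : ℕ} (hA : #A ≤ q * k) {x : α} (hx : x ∈ A) :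
    orderRank A x / q < k :=
  Nat.div_lt_of_lt_mul ((orderRank_lt_card hx).trans_le hA)

lemma card_orderBlock_le (A : Finset α) {q : ℕ} (hq : 0 < q) (i : ℕ) :
    #(orderBlock A q i) ≤ q := by
  calc #(orderBlock A q i) ≤ #(Ico (i * q) (i * q + q)) := by
        refine card_le_card_of_injOn (orderRank A) (fun x hx => ?_)
          ((orderRank_strictMonoOn A).injOn.mono (filter_subset _ A))
        have hx : orderRank A x / q = i := (mem_filter.1 hx).2
        have := (Nat.div_eq_iff hq).1 hx
        simp only [coe_Ico, Set.mem_Ico]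
        omega
    _ = q := by simp

end OrderBlocks

lemma card_image_le_two_mul_of_monotoneOn {ι : Type*} [LinearOrder ι] {s : Finset ι}
    {u v : ι → ℕ} {k : ℕ} (hu : MonotoneOn u s) (hv : MonotoneOn v s)
    (hk : ∀ x ∈ s, u x < k ∧ v x < k) :
    #(s.image fun x => (u x, v x)) ≤ 2 * k := by
  calc #(s.image fun x => (u x, v x)) ≤ #(range (2 * k)) := by
        refine card_le_card_of_injOn (fun p => p.1 + p.2) ?_ ?_
        · simp only [coe_image, Set.mapsTo_image_iff, coe_range]
          intro x hx
          have := hk x hx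
          simp only [Function.comp_apply, Set.mem_Iio]
          omega
        · simp only [coe_image, Set.InjOn, Set.forall_mem_image, Prod.mk.injEq]
          intro x hx y hy hxy
          rcases le_total x y with h | h
          · have := hu hx hy h; have := hv hx hy h; omega
          · have := hu hy hx h; have := hv hy hx h; omega
    _ = 2 * k := card_range _

lemma card_image_le_two_mul_of_antitoneOn {ι : Type*} [LinearOrder ι] {s : Finset ι}
    {u v : ι → ℕ} {k : ℕ} (hu : MonotoneOn u s) (hv : AntitoneOn v s)
    (hk : ∀ x ∈ s, u x < k ∧ v x < k) :
    #(s.image fun x => (u x, v x)) ≤ 2 * k := by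
  let flip : ℕ × ℕ → ℕ × ℕ := fun p => (p.1, k - 1 - p.2)
  have hflip : Set.InjOn flip (s.image fun x => (u x, v x)) := by
    simp only [coe_image, Set.InjOn, Set.forall_mem_image, Prod.mk.injEq, flip]
    intro x hx y hy hxy
    have := hk x hx; have := hk y hy
    omega
  rw [← card_image_of_injOn hflip, image_image]
  exact card_image_le_two_mul_of_monotoneOn hu
    (fun x hx y hy hxy => Nat.sub_le_sub_left (hv hx hy hxy) _)
    (fun x hx => by have := hk x hx; dsimp only; omega)

section GridLines

variable {F : Type*} [Field F]

def affApply (γ : F × F) (x : F) : F := γ.1 * x + γ.2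

/-- The abscissae of the points of the grid `X × Y` on the line `y = γ.1 * x + γ.2`. -/
def gridOnLine [DecidableEq F] (X Y : Finset F) (γ : F × F) : Finset F :=
  {x ∈ X | affApply γ x ∈ Y}

lemma eq_of_affApply_eq_of_ne {γ δ : F × F} {x x' : F} (hxx' : x ≠ x')
    (h : affApply γ x = affApply δ x) (h' : affApply γ x' = affApply δ x') : γ = δ := by
  simp only [affApply] at h h'
  have hslope : γ.1 = δ.1 :=
    mul_right_cancel₀ (sub_ne_zero.2 hxx') (by linear_combination h - h')
  exact Prod.ext hslope (by rw [hslope] at h; linear_combination h)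

/-- Two distinct points lie on at most one line. -/
lemma sum_card_offDiag_gridOnLine_le [DecidableEq F] (X Y : Finset F) (D : Finset (F × F)) :
    ∑ γ ∈ D, #(gridOnLine X Y γ).offDiag ≤ (#X * #Y) ^ 2 := by
  rw [← card_sigma]
  calc #(D.sigma fun γ => (gridOnLine X Y γ).offDiag)
      ≤ #((X ×ˢ X) ×ˢ (Y ×ˢ Y)) := by
        refine card_le_card_of_injOn
          (fun t => ((t.2.1, t.2.2), (affApply t.1 t.2.1, affApply t.1 t.2.2))) ?_ ?_
        · rintro ⟨γ, x, x'⟩ ht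
          simp only [coe_sigma, Set.mem_sigma_iff, mem_coe, mem_offDiag, gridOnLine,
            mem_filter] at ht
          simp [ht]
        · rintro ⟨γ, x, x'⟩ ht ⟨δ, y, y'⟩ - h
          simp only [coe_sigma, Set.mem_sigma_iff, mem_coe, mem_offDiag] at ht
          simp only [Prod.mk.injEq] at h
          obtain ⟨⟨rfl, rfl⟩, h, h'⟩ := h
          obtain rfl := eq_of_affApply_eq_of_ne ht.2.2.2 h h'
          rfl
    _ = (#X * #Y) ^ 2 := by simp only [card_product]; ring

end GridLines

lemma le_add_mul_sqrt_of_sq_le {t m Q : ℝ} (hm : 0 ≤ m) (hQ : 0 ≤ Q)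
    (h : t ^ 2 ≤ m * (Q ^ 2 + t)) : t ≤ m + Q * √m := by
  have hr := Real.sqrt_nonneg m
  have hm' := Real.sq_sqrt hm
  generalize √m = r at hr hm' ⊢
  subst hm'
  nlinarith [mul_nonneg hQ hr]

lemma sum_le_card_support_add_mul_sqrt {ι : Type*} (s : Finset ι) (f : ι → ℕ) {Q : ℕ}
    (h : ∑ i ∈ s, f i * (f i - 1) ≤ Q ^ 2) :
    (∑ i ∈ s, f i : ℝ) ≤ #{i ∈ s | f i ≠ 0} + Q * √(#{i ∈ s | f i ≠ 0} : ℝ) := by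
  rw [← Nat.cast_sum, ← sum_filter_ne_zero s, Nat.cast_sum]
  refine le_add_mul_sqrt_of_sq_le (Nat.cast_nonneg _) (Nat.cast_nonneg _) ?_
  have hsq : ∑ i ∈ s with f i ≠ 0, f i ^ 2 ≤ Q ^ 2 + ∑ i ∈ s with f i ≠ 0, f i :=
    calc ∑ i ∈ s with f i ≠ 0, f i ^ 2
        = ∑ i ∈ s with f i ≠ 0, f i * (f i - 1) + ∑ i ∈ s with f i ≠ 0, f i := by
          rw [← sum_add_distrib]
          refine sum_congr rfl fun i _ => ?_
          rw [sq, Nat.mul_sub_one, Nat.sub_add_cancel (Nat.le_mul_self _)]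
      _ ≤ Q ^ 2 + ∑ i ∈ s with f i ≠ 0, f i := by
          gcongr
          exact (sum_le_sum_of_subset (filter_subset _ s)).trans h
  calc (∑ i ∈ s with f i ≠ 0, (f i : ℝ)) ^ 2
      ≤ #{i ∈ s | f i ≠ 0} * ∑ i ∈ s with f i ≠ 0, (f i : ℝ) ^ 2 := sq_sum_le_card_mul_sum_sq
    _ ≤ #{i ∈ s | f i ≠ 0} * (Q ^ 2 + ∑ i ∈ s with f i ≠ 0, (f i : ℝ)) := by
        gcongr
        exact_mod_cast hsq

section GridIncidences

variable {F : Type*} [Field F] [LinearOrder F]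

lemma card_gridOnLine_eq_sum_cells (A : Finset F) {q k : ℕ} (hA : #A ≤ q * k) (γ : F × F) :
    #(gridOnLine A A γ) = ∑ c ∈ range k ×ˢ range k,
      #(gridOnLine (orderBlock A q c.1) (orderBlock A q c.2) γ) := by
  rw [card_eq_sum_card_fiberwise (t := range k ×ˢ range k)
    (f := fun x => (orderRank A x / q, orderRank A (affApply γ x) / q)) fun x hx => by
      simp only [gridOnLine, coe_filter] at hx
      simp [orderRank_div_lt hA hx.1, orderRank_div_lt hA hx.2]]
  refine sum_congr rfl fun c _ => congrArg card ?_
  ext x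
  simp only [gridOnLine, orderBlock, mem_filter, Prod.ext_iff]
  tauto

variable [IsStrictOrderedRing F]

lemma card_cells_meeting_line_le (A : Finset F) {q k : ℕ} (hA : #A ≤ q * k) {γ : F × F}
    (hγ : γ.1 ≠ 0) :
    #{c ∈ range k ×ˢ range k | #(gridOnLine (orderBlock A q c.1) (orderBlock A q c.2) γ) ≠ 0}
      ≤ 2 * k := by
  set u : F → ℕ := fun x => orderRank A x / q
  have hu : Monotone u := fun x y h => Nat.div_le_div_right (orderRank_mono A h)
  have hbound : ∀ x ∈ gridOnLine A A γ, u x < k ∧ u (affApply γ x) < k := fun x hx => by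
    simp only [gridOnLine, mem_filter] at hx
    exact ⟨orderRank_div_lt hA hx.1, orderRank_div_lt hA hx.2⟩
  calc _ ≤ #((gridOnLine A A γ).image fun x => (u x, u (affApply γ x))) := by
        refine card_le_card fun c hc => ?_
        obtain ⟨-, hc⟩ := mem_filter.1 hc
        obtain ⟨x, hx⟩ := card_ne_zero.1 hc
        simp only [gridOnLine, orderBlock, mem_filter] at hx
        exact mem_image.2 ⟨x, by simp [gridOnLine, hx], by simp [u, hx]⟩
    _ ≤ 2 * k := by
        rcases hγ.lt_or_gt with hneg | hpos
        · refine card_image_le_two_mul_of_antitoneOn (hu.monotoneOn _)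
            (fun x _ y _ hxy => hu ?_) hbound
          simp only [affApply]
          nlinarith
        · refine card_image_le_two_mul_of_monotoneOn (hu.monotoneOn _)
            (fun x _ y _ hxy => hu ?_) hbound
          simp only [affApply]
          nlinarith

/-- Cut `A × A` into `k × k` cells of side at most `q`: a line of nonzero slope meets at most
`2k` cells, and inside each cell two points determine the line. -/
theorem sum_card_gridOnLine_le (A : Finset F) (D : Finset (F × F)) (hD : ∀ γ ∈ D, γ.1 ≠ 0)
    {q k : ℕ} (hq : 0 < q) (hA : #A ≤ q * k) :
    (∑ γ ∈ D, #(gridOnLine A A γ) : ℝ) ≤ 2 * k * #D + q ^ 2 * k * √(2 * k * #D) := by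
  set cells := range k ×ˢ range k
  set f : ℕ × ℕ → F × F → ℕ := fun c γ =>
    #(gridOnLine (orderBlock A q c.1) (orderBlock A q c.2) γ)
  set m : ℕ × ℕ → ℕ := fun c => #{γ ∈ D | f c γ ≠ 0}
  have hcell (c : ℕ × ℕ) : (∑ γ ∈ D, f c γ : ℝ) ≤ m c + (q ^ 2 : ℕ) * √(m c : ℝ) := by
    refine sum_le_card_support_add_mul_sqrt D (f c) ?_
    calc ∑ γ ∈ D, f c γ * (f c γ - 1)
        = ∑ γ ∈ D, #(gridOnLine (orderBlock A q c.1) (orderBlock A q c.2) γ).offDiag := by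
          simp only [offDiag_card, Nat.mul_sub_one, f]
      _ ≤ (#(orderBlock A q c.1) * #(orderBlock A q c.2)) ^ 2 :=
          sum_card_offDiag_gridOnLine_le _ _ D
      _ ≤ (q ^ 2) ^ 2 := by
          gcongr
          rw [sq]
          exact Nat.mul_le_mul (card_orderBlock_le A hq _) (card_orderBlock_le A hq _)
  have hm : ∑ c ∈ cells, m c ≤ 2 * k * #D :=
    calc ∑ c ∈ cells, m c = ∑ γ ∈ D, #{c ∈ cells | f c γ ≠ 0} :=
          sum_card_bipartiteAbove_eq_sum_card_bipartiteBelow fun c γ => f c γ ≠ 0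
      _ ≤ ∑ γ ∈ D, 2 * k := sum_le_sum fun γ hγ => card_cells_meeting_line_le A hA (hD γ hγ)
      _ = 2 * k * #D := by rw [sum_const, smul_eq_mul, mul_comm]
  have hmR : (∑ c ∈ cells, m c : ℝ) ≤ 2 * k * #D := by exact_mod_cast hm
  have hsqrt : ∑ c ∈ cells, √(m c : ℝ) ≤ k * √(2 * k * #D) :=
    calc ∑ c ∈ cells, √(m c : ℝ) = ∑ c ∈ cells, √(m c : ℝ) * 1 := by simp
      _ ≤ √(∑ c ∈ cells, √(m c : ℝ) ^ 2) * √(∑ c ∈ cells, (1 : ℝ) ^ 2) :=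
          Real.sum_mul_le_sqrt_mul_sqrt _ _ _
      _ = √(∑ c ∈ cells, (m c : ℝ)) * k := by
          simp [Real.sq_sqrt, cells, Real.sqrt_mul_self]
      _ ≤ k * √(2 * k * #D) := by
          rw [mul_comm]
          gcongr
  calc (∑ γ ∈ D, #(gridOnLine A A γ) : ℝ) = ∑ c ∈ cells, ∑ γ ∈ D, (f c γ : ℝ) := by
        rw [sum_comm]
        exact_mod_cast sum_congr rfl fun γ _ => card_gridOnLine_eq_sum_cells A hA γ
    _ ≤ ∑ c ∈ cells, (m c + (q ^ 2 : ℕ) * √(m c : ℝ)) := sum_le_sum fun c _ => hcell c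
    _ = ∑ c ∈ cells, (m c : ℝ) + q ^ 2 * ∑ c ∈ cells, √(m c : ℝ) := by
        rw [sum_add_distrib, mul_sum]; push_cast; rfl
    _ ≤ 2 * k * #D + q ^ 2 * (k * √(2 * k * #D)) := by gcongr
    _ = 2 * k * #D + q ^ 2 * k * √(2 * k * #D) := by ring

lemma sq_mul_card_le_of_rich (A : Finset F) (D : Finset (F × F)) (hD : ∀ γ ∈ D, γ.1 ≠ 0)
    {τ q k : ℕ} (hq : 0 < q) (hA : #A ≤ q * k) (hkτ : 8 * k ≤ τ)
    (hrich : ∀ γ ∈ D, τ ≤ #(gridOnLine A A γ)) :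
    τ ^ 2 * #D ≤ 8 * q ^ 4 * k ^ 3 := by
  rcases Nat.eq_zero_or_pos #D with hD0 | hD0
  · simp [hD0]
  have hd : (0 : ℝ) < #D := by exact_mod_cast hD0
  have hk : (8 * k : ℝ) ≤ τ := by exact_mod_cast hkτ
  have hlow : (τ * #D : ℝ) ≤ ∑ γ ∈ D, (#(gridOnLine A A γ) : ℝ) := by
    rw [mul_comm, ← nsmul_eq_mul, ← sum_const]
    exact sum_le_sum fun γ hγ => by exact_mod_cast hrich γ hγ
  have hhalf : τ * #D / 2 ≤ q ^ 2 * k * √(2 * k * #D) := by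
    have := sum_card_gridOnLine_le A D hD hq hA
    have := mul_le_mul_of_nonneg_right hk hd.le
    have := mul_nonneg (Nat.cast_nonneg (α := ℝ) τ) hd.le
    linarith
  have hsq : (τ ^ 2 * #D) * #D ≤ (8 * q ^ 4 * k ^ 3) * (#D : ℝ) :=
    calc (τ ^ 2 * #D) * #D = 4 * (τ * #D / 2 : ℝ) ^ 2 := by ring
      _ ≤ 4 * (q ^ 2 * k * √(2 * k * #D)) ^ 2 := by gcongr
      _ = (8 * q ^ 4 * k ^ 3) * #D := by
          rw [mul_pow, Real.sq_sqrt (by positivity)]; ring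
  exact_mod_cast le_of_mul_le_mul_right hsq hd

theorem card_mul_pow_three_le_of_rich (A : Finset F) (D : Finset (F × F))
    (hD : ∀ γ ∈ D, γ.1 ≠ 0) {τ : ℕ} (hτ : 2 ≤ τ) (hrich : ∀ γ ∈ D, τ ≤ #(gridOnLine A A γ)) :
    #D * τ ^ 3 ≤ 2048 * #A ^ 4 := by
  rcases D.eq_empty_or_nonempty with rfl | ⟨γ₀, hγ₀⟩
  · simp
  rcases lt_or_ge τ 8 with hsmall | hlarge
  · have hpairs : 2 * #D ≤ #A ^ 4 :=
      calc 2 * #D = ∑ _γ ∈ D, 2 := by rw [sum_const, smul_eq_mul, mul_comm]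
        _ ≤ ∑ γ ∈ D, #(gridOnLine A A γ).offDiag := sum_le_sum fun γ hγ => by
            have := hrich γ hγ
            rw [offDiag_card]
            nlinarith [Nat.sub_add_cancel (Nat.le_mul_self #(gridOnLine A A γ))]
        _ ≤ (#A * #A) ^ 2 := sum_card_offDiag_gridOnLine_le A A D
        _ = #A ^ 4 := by ring
    calc #D * τ ^ 3 ≤ #D * 8 ^ 3 := by gcongr
      _ ≤ 2048 * #A ^ 4 := by omega
  · set k := τ / 8
    have hk : 0 < k := by omega
    have hτA : τ ≤ #A := (hrich γ₀ hγ₀).trans (card_filter_le _ _)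
    have hA : #A ≤ (#A / k + 1) * k := by
      rw [Nat.add_mul, one_mul]; exact (Nat.lt_div_mul_add hk).le
    have hqk : (#A / k + 1) * k ≤ 2 * #A := by
      rw [Nat.add_mul, one_mul]; have := Nat.div_mul_le_self #A k; omega
    have hmain := sq_mul_card_le_of_rich A D hD (Nat.succ_pos _) hA (Nat.mul_div_le τ 8) hrich
    calc #D * τ ^ 3 = τ * (τ ^ 2 * #D) := by ring
      _ ≤ (16 * k) * (8 * (#A / k + 1) ^ 4 * k ^ 3) := by gcongr; omega
      _ = 128 * ((#A / k + 1) * k) ^ 4 := by ring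
      _ ≤ 128 * (2 * #A) ^ 4 := by gcongr
      _ = 2048 * #A ^ 4 := by ring

end GridIncidences

lemma sq_card_le_card_image_mul_card_filter_eq {ι κ : Type*} [DecidableEq ι] [DecidableEq κ]
    (s : Finset ι) (f : ι → κ) :
    #s ^ 2 ≤ #(s.image f) * #{x ∈ s ×ˢ s | f x.1 = f x.2} := by
  have hpairs : #{x ∈ s ×ˢ s | f x.1 = f x.2} = ∑ c ∈ s.image f, #{i ∈ s | f i = c} ^ 2 := by
    rw [card_eq_sum_card_fiberwise (f := fun x : ι × ι => f x.1) (t := s.image f)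
      fun x hx => mem_image_of_mem f (mem_product.1 (mem_filter.1 hx).1).1]
    refine sum_congr rfl fun c _ => ?_
    rw [sq, ← card_product]
    congr 1
    ext ⟨i, j⟩
    simp only [mem_filter, mem_product]
    grind
  calc #s ^ 2 = (∑ c ∈ s.image f, #{i ∈ s | f i = c}) ^ 2 := by rw [← card_eq_sum_card_image]
    _ ≤ #(s.image f) * ∑ c ∈ s.image f, #{i ∈ s | f i = c} ^ 2 := sq_sum_le_card_mul_sum_sq
    _ = #(s.image f) * #{x ∈ s ×ˢ s | f x.1 = f x.2} := by rw [hpairs]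

lemma le_sum_two_pow_of_lt {a n : ℕ} (h : a < 2 ^ n) :
    a ≤ ∑ j ∈ range n, if 2 ^ j ≤ a then 2 ^ j else 0 := by
  rcases Nat.eq_zero_or_pos a with rfl | ha
  · exact Nat.zero_le _
  set m := Nat.log 2 a
  have hm : 2 ^ m ≤ a := Nat.pow_log_le_self 2 ha.ne'
  have hmn : m + 1 ≤ n := Nat.pow_lt_pow_iff_right (by norm_num) |>.1 (hm.trans_lt h)
  calc a ≤ 2 ^ (m + 1) - 1 := Nat.le_sub_one_of_lt (Nat.lt_pow_succ_log_self one_lt_two a)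
    _ = ∑ j ∈ range (m + 1), 2 ^ j := by simp [Nat.geomSum_eq le_rfl]
    _ = ∑ j ∈ range (m + 1), if 2 ^ j ≤ a then 2 ^ j else 0 := by
        refine sum_congr rfl fun j hj => ?_
        rw [if_pos ((Nat.pow_le_pow_right two_pos (Nat.lt_succ_iff.1 (mem_range.1 hj))).trans
          hm)]
    _ ≤ ∑ j ∈ range n, if 2 ^ j ≤ a then 2 ^ j else 0 :=
        sum_le_sum_of_subset (range_subset_range.2 hmn)

lemma sum_le_sum_two_pow_mul_card_filter {ι : Type*} (S : Finset ι) (r : ι → ℕ) {n : ℕ}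
    (hr : ∀ i ∈ S, r i < 2 ^ n) :
    ∑ i ∈ S, r i ≤ ∑ j ∈ range n, 2 ^ j * #{i ∈ S | 2 ^ j ≤ r i} := by
  calc ∑ i ∈ S, r i ≤ ∑ i ∈ S, ∑ j ∈ range n, if 2 ^ j ≤ r i then 2 ^ j else 0 :=
        sum_le_sum fun i hi => le_sum_two_pow_of_lt (hr i hi)
    _ = ∑ j ∈ range n, 2 ^ j * #{i ∈ S | 2 ^ j ≤ r i} := by
        rw [sum_comm]
        refine sum_congr rfl fun j _ => ?_
        rw [← sum_filter, sum_const, smul_eq_mul, mul_comm]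

lemma sum_two_pow_le {s : Finset ℕ} {T : ℝ} (hT : 0 ≤ T) (h : ∀ j ∈ s, (2 : ℝ) ^ j ≤ T) :
    ∑ j ∈ s, (2 : ℝ) ^ j ≤ 2 * T := by
  rcases s.eq_empty_or_nonempty with rfl | hs
  · simpa using hT
  calc ∑ j ∈ s, (2 : ℝ) ^ j ≤ ∑ j ∈ range (s.max' hs + 1), (2 : ℝ) ^ j :=
        sum_le_sum_of_subset_of_nonneg
          (fun j hj => mem_range.2 (Nat.lt_succ_of_le (s.le_max' j hj)))
          fun _ _ _ => by positivity
    _ = 2 * 2 ^ s.max' hs - 1 := by rw [geom_sum_eq (by norm_num)]; ring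
    _ ≤ 2 * T := by linarith [h _ (s.max'_mem hs)]

lemma sqrt_two_pow (j : ℕ) : √((2 : ℝ) ^ j) = √2 ^ j := by
  rw [Real.sqrt_eq_iff_mul_self_eq (by positivity) (by positivity), ← mul_pow,
    Real.mul_self_sqrt zero_le_two]

lemma sum_inv_sqrt_two_pow_le {s : Finset ℕ} {T : ℝ} (hT : 0 < T) (h : ∀ j ∈ s, T < 2 ^ j) :
    ∑ j ∈ s, (√2 ^ j)⁻¹ ≤ 4 / √T := by
  rcases s.eq_empty_or_nonempty with rfl | hs
  · simp only [sum_empty]; positivity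
  set r : ℝ := (√2)⁻¹
  have hr : r ≤ 3 / 4 := by
    rw [inv_le_comm₀ (by positivity) (by norm_num), Real.le_sqrt (by norm_num) (by norm_num)]
    norm_num
  set m := s.min' hs
  have hm : r ^ m ≤ (√T)⁻¹ := by
    rw [inv_pow, ← sqrt_two_pow]
    exact inv_anti₀ (by positivity) (Real.sqrt_le_sqrt (h m (s.min'_mem hs)).le)
  calc ∑ j ∈ s, (√2 ^ j)⁻¹ = ∑ j ∈ s, r ^ j := sum_congr rfl fun j _ => (inv_pow _ _).symm
    _ ≤ ∑ j ∈ Ico m (s.max' hs + 1), r ^ j :=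
        sum_le_sum_of_subset_of_nonneg
          (fun j hj => mem_Ico.2 ⟨s.min'_le j hj, Nat.lt_succ_of_le (s.le_max' j hj)⟩)
          fun _ _ _ => by positivity
    _ ≤ r ^ m / (1 - r) := geom_sum_Ico_le_of_lt_one (by positivity) (by linarith)
    _ ≤ (√T)⁻¹ / (1 / 4) := div_le_div₀ (by positivity) hm (by norm_num) (by linarith)
    _ = 4 / √T := by ring

lemma sum_le_two_mul_add_four_mul_sqrt {s : Finset ℕ} {x : ℕ → ℝ} {α γ T : ℝ} (hα : 0 ≤ α)
    (hT : 0 < T) (h₁ : ∀ j ∈ s, x j ≤ α * 2 ^ j) (h₂ : ∀ j ∈ s, x j ^ 2 ≤ γ / 2 ^ j) :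
    ∑ j ∈ s, x j ≤ 2 * α * T + 4 * √(γ / T) := by
  rw [← sum_filter_add_sum_filter_not s fun j => (2 : ℝ) ^ j ≤ T]
  gcongr
  · calc ∑ j ∈ s with (2 : ℝ) ^ j ≤ T, x j ≤ ∑ j ∈ s with (2 : ℝ) ^ j ≤ T, α * 2 ^ j :=
          sum_le_sum fun j hj => h₁ j (mem_filter.1 hj).1
      _ ≤ α * (2 * T) := by
          rw [← mul_sum]
          exact mul_le_mul_of_nonneg_left
            (sum_two_pow_le hT.le fun j hj => (mem_filter.1 hj).2) hα
      _ = 2 * α * T := by ring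
  · calc ∑ j ∈ s with ¬(2 : ℝ) ^ j ≤ T, x j
        ≤ ∑ j ∈ s with ¬(2 : ℝ) ^ j ≤ T, √γ * (√2 ^ j)⁻¹ := by
          refine sum_le_sum fun j hj => ?_
          calc x j ≤ |x j| := le_abs_self _
            _ ≤ √(γ / 2 ^ j) := Real.abs_le_sqrt (h₂ j (mem_filter.1 hj).1)
            _ = √γ * (√2 ^ j)⁻¹ := by
                rw [Real.sqrt_div' _ (by positivity), sqrt_two_pow, div_eq_mul_inv]
      _ ≤ √γ * (4 / √T) := by
          rw [← mul_sum]
          exact mul_le_mul_of_nonneg_left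
            (sum_inv_sqrt_two_pow_le hT fun j hj => not_le.1 (mem_filter.1 hj).2)
            (Real.sqrt_nonneg γ)
      _ = 4 * √(γ / T) := by rw [Real.sqrt_div' _ hT.le]; ring

lemma sum_le_of_le_mul_two_pow_of_sq_le {s : Finset ℕ} {x : ℕ → ℝ} {α γ : ℝ} (hα : 0 ≤ α)
    (hγ : 0 ≤ γ) (h₁ : ∀ j ∈ s, x j ≤ α * 2 ^ j) (h₂ : ∀ j ∈ s, x j ^ 2 ≤ γ / 2 ^ j) :
    ∑ j ∈ s, x j ≤ 6 * (α * γ) ^ ((1 : ℝ) / 3) := by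
  set u := (α * γ) ^ ((1 : ℝ) / 3)
  have hu0 : 0 ≤ u := by positivity
  rcases hα.eq_or_lt with rfl | hα
  · exact (sum_nonpos fun j hj => by simpa using h₁ j hj).trans (by positivity)
  rcases hγ.eq_or_lt with rfl | hγ
  · refine (sum_nonpos fun j hj => ?_).trans (by positivity)
    nlinarith [h₂ j hj, zero_div ((2 : ℝ) ^ j)]
  have hu : 0 < u := by positivity
  have hu3 : u ^ 3 = α * γ := by
    rw [← Real.rpow_natCast, ← Real.rpow_mul (by positivity)]; norm_num
  -- the two bounds on `x j` cross over at `2 ^ j = u / α = (γ / α²) ^ (1/3)`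
  have hT : γ / (u / α) = u ^ 2 := by
    field_simp
    linear_combination -hu3
  calc ∑ j ∈ s, x j ≤ 2 * α * (u / α) + 4 * √(γ / (u / α)) :=
        sum_le_two_mul_add_four_mul_sqrt hα.le (by positivity) h₁ h₂
    _ = 6 * u := by rw [hT, Real.sqrt_sq hu0]; field_simp; ring

section AffineGroup

lemma affApply_acomp (l m : ℝ × ℝ) (x : ℝ) :
    affApply (acomp l m) x = affApply l (affApply m x) := by
  simp only [affApply, acomp]; ring

lemma affApply_ainv_affApply {l : ℝ × ℝ} (hl : l.1 ≠ 0) (x : ℝ) :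
    affApply (ainv l) (affApply l x) = x := by
  simp only [affApply, ainv]; field_simp; ring

lemma affApply_affApply_ainv {l : ℝ × ℝ} (hl : l.1 ≠ 0) (y : ℝ) :
    affApply l (affApply (ainv l) y) = y := by
  simp only [affApply, ainv]; field_simp; ring

/-- `l₁⁻¹ ∘ l₂` for `p = (l₁, l₂)`. -/
noncomputable def affQuot (p : (ℝ × ℝ) × (ℝ × ℝ)) : ℝ × ℝ := acomp (ainv p.1) p.2

lemma affQuot_fst_ne_zero {p : (ℝ × ℝ) × (ℝ × ℝ)} (h₁ : p.1.1 ≠ 0) (h₂ : p.2.1 ≠ 0) :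
    (affQuot p).1 ≠ 0 :=
  mul_ne_zero (inv_ne_zero h₁) h₂

lemma affEnergy_eq_card (L : Finset (ℝ × ℝ)) :
    affEnergy L = #{w ∈ (L ×ˢ L) ×ˢ (L ×ˢ L) | affQuot w.1 = affQuot w.2} := by
  rw [affEnergy, ← Set.ncard_coe_finset, ← Set.ncard_image_of_injective _
    (Equiv.prodAssoc (ℝ × ℝ) (ℝ × ℝ) ((ℝ × ℝ) × (ℝ × ℝ))).injective,
    Equiv.image_eq_preimage_symm]
  congr 1
  ext ⟨a, b, c, d⟩
  rw [Set.mem_preimage, mem_coe, mem_filter]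
  simp [affQuot, and_assoc]

end AffineGroup

section Incidences

variable (A B : Finset ℝ) (L : Finset (ℝ × ℝ))

noncomputable def rowIncidences (y : ℝ) : ℕ := #{l ∈ L | affApply (ainv l) y ∈ A}

variable {L}

lemma inc_eq_sum_rowIncidences (hL : ∀ l ∈ L, l.1 ≠ 0) :
    inc A B L = ∑ y ∈ B, rowIncidences A L y := by
  have hinc : inc A B L = #{t ∈ (A ×ˢ B) ×ˢ L | t.1.2 = affApply t.2 t.1.1} := by
    rw [inc, ← Set.ncard_coe_finset]
    congr 1
    ext ⟨⟨x, y⟩, l⟩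
    rw [mem_coe, mem_filter]
    simp only [Set.mem_ofPred_eq, mem_product, affApply]
    tauto
  rw [hinc, card_eq_sum_card_fiberwise (f := fun t => t.1.2) (t := B) fun t ht => by
    rw [mem_coe, mem_filter, mem_product, mem_product] at ht
    exact ht.1.1.2]
  refine sum_congr rfl fun y hy =>
    card_nbij' (·.2) (fun l => ((affApply (ainv l) y, y), l)) ?_ ?_ ?_ ?_
  · rintro ⟨⟨x, y'⟩, l⟩ ht
    simp only [mem_coe, mem_filter, mem_product] at ht
    obtain ⟨⟨⟨⟨hx, -⟩, hl⟩, rfl⟩, rfl⟩ := ht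
    simp [hl, affApply_ainv_affApply (hL l hl), hx]
  · intro l hl
    simp only [mem_coe, mem_filter] at hl
    simp [hl, hy, affApply_affApply_ainv (hL l hl.1)]
  · rintro ⟨⟨x, y'⟩, l⟩ ht
    simp only [mem_coe, mem_filter, mem_product] at ht
    obtain ⟨⟨⟨⟨-, -⟩, hl⟩, rfl⟩, rfl⟩ := ht
    simp [affApply_ainv_affApply (hL l hl)]
  · intro l _
    rfl

lemma sum_sq_rowIncidences_le (hL : ∀ l ∈ L, l.1 ≠ 0) :
    ∑ y ∈ B, rowIncidences A L y ^ 2 ≤ ∑ p ∈ L ×ˢ L, #(gridOnLine A A (affQuot p)) := by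
  set P : ℝ → (ℝ × ℝ) × (ℝ × ℝ) → Prop := fun y p =>
    affApply (ainv p.1) y ∈ A ∧ affApply (ainv p.2) y ∈ A
  calc ∑ y ∈ B, rowIncidences A L y ^ 2 = ∑ y ∈ B, #{p ∈ L ×ˢ L | P y p} := by
        simp only [rowIncidences, sq, ← card_product, P, ← filter_product]
    _ = ∑ p ∈ L ×ˢ L, #{y ∈ B | P y p} := sum_card_bipartiteAbove_eq_sum_card_bipartiteBelow P
    _ ≤ ∑ p ∈ L ×ˢ L, #(gridOnLine A A (affQuot p)) := by
        refine sum_le_sum fun p hp => card_le_card_of_injOn (affApply (ainv p.2)) ?_ ?_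
        · intro y hy
          simp only [mem_coe, mem_filter, P] at hy
          have h₂ := hL p.2 (mem_product.1 hp).2
          simp [gridOnLine, hy.2.1, hy.2.2, affQuot, affApply_acomp,
            affApply_affApply_ainv h₂]
        · intro y _ y' _ h
          simpa [affApply_affApply_ainv (hL p.2 (mem_product.1 hp).2)] using
            congrArg (affApply p.2) h

end Incidences

section EnergyBound

variable (A : Finset ℝ) {L : Finset (ℝ × ℝ)}

lemma sq_card_rich_pairs_mul_pow_three_le (hL : ∀ l ∈ L, l.1 ≠ 0) {τ : ℕ} (hτ : 2 ≤ τ) :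
    #{p ∈ L ×ˢ L | τ ≤ #(gridOnLine A A (affQuot p))} ^ 2 * τ ^ 3
      ≤ 2048 * #A ^ 4 * affEnergy L := by
  set P := {p ∈ L ×ˢ L | τ ≤ #(gridOnLine A A (affQuot p))}
  have hE : #{w ∈ P ×ˢ P | affQuot w.1 = affQuot w.2} ≤ affEnergy L := by
    rw [affEnergy_eq_card]
    exact card_le_card <| filter_subset_filter _ <|
      product_subset_product (filter_subset _ _) (filter_subset _ _)
  have hrich : #(P.image affQuot) * τ ^ 3 ≤ 2048 * #A ^ 4 := by
    refine card_mul_pow_three_le_of_rich A _ (forall_mem_image.2 fun p hp => ?_) hτ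
      (forall_mem_image.2 fun p hp => (mem_filter.1 hp).2)
    have hpL := mem_product.1 (mem_filter.1 hp).1
    exact affQuot_fst_ne_zero (hL _ hpL.1) (hL _ hpL.2)
  calc #P ^ 2 * τ ^ 3 ≤ #(P.image affQuot) * affEnergy L * τ ^ 3 := by
        gcongr
        exact (sq_card_le_card_image_mul_card_filter_eq P affQuot).trans (by gcongr)
    _ = #(P.image affQuot) * τ ^ 3 * affEnergy L := by ring
    _ ≤ 2048 * #A ^ 4 * affEnergy L := by gcongr

lemma sum_card_gridOnLine_affQuot_le (hL : ∀ l ∈ L, l.1 ≠ 0) :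
    (∑ p ∈ L ×ˢ L, #(gridOnLine A A (affQuot p)) : ℝ)
      ≤ #L ^ 2 + 6 * (2048 * #A ^ 4 * affEnergy L * #L ^ 2) ^ ((1 : ℝ) / 3) := by
  set P : ℕ → ℕ := fun j => #{p ∈ L ×ˢ L | 2 ^ j ≤ #(gridOnLine A A (affQuot p))}
  have hPL (j : ℕ) : P j ≤ #L ^ 2 := (card_filter_le _ _).trans (by rw [card_product, sq])
  have hdyadic := sum_le_sum_two_pow_mul_card_filter (L ×ˢ L)
    (fun p => #(gridOnLine A A (affQuot p))) (n := #A + 1) fun p _ => (card_filter_le _ _).trans_lt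
      (Nat.lt_two_pow_self.trans (Nat.pow_lt_pow_succ one_lt_two))
  rw [sum_range_succ'] at hdyadic
  have hlevels : ∑ j ∈ range #A, (2 ^ (j + 1) * P (j + 1) : ℝ)
      ≤ 6 * ((2 * #L ^ 2) * (1024 * #A ^ 4 * affEnergy L)) ^ ((1 : ℝ) / 3) := by
    refine sum_le_of_le_mul_two_pow_of_sq_le (by positivity) (by positivity) (fun j _ => ?_)
      (fun j _ => ?_)
    · calc (2 ^ (j + 1) * P (j + 1) : ℝ) ≤ 2 ^ (j + 1) * #L ^ 2 := by
            gcongr; exact_mod_cast hPL _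
        _ = 2 * #L ^ 2 * 2 ^ j := by ring
    · have h := sq_card_rich_pairs_mul_pow_three_le A hL (τ := 2 ^ (j + 1))
        (Nat.le_self_pow (Nat.succ_ne_zero j) 2)
      rw [le_div_iff₀ (by positivity)]
      calc (2 ^ (j + 1) * P (j + 1) : ℝ) ^ 2 * 2 ^ j
          = (P (j + 1) ^ 2 * (2 ^ (j + 1)) ^ 3 : ℕ) / 2 := by
            simp only [Nat.cast_mul, Nat.cast_pow, Nat.cast_ofNat]; ring
        _ ≤ (2048 * #A ^ 4 * affEnergy L : ℕ) / 2 := by gcongr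
        _ = 1024 * #A ^ 4 * affEnergy L := by push_cast; ring
  calc (∑ p ∈ L ×ˢ L, #(gridOnLine A A (affQuot p)) : ℝ)
      ≤ ∑ j ∈ range #A, (2 ^ (j + 1) * P (j + 1) : ℝ) + P 0 := by
        rw [pow_zero, one_mul] at hdyadic
        exact_mod_cast hdyadic
    _ ≤ 6 * ((2 * #L ^ 2) * (1024 * #A ^ 4 * affEnergy L)) ^ ((1 : ℝ) / 3) + #L ^ 2 := by
        gcongr; exact_mod_cast hPL 0
    _ = #L ^ 2 + 6 * (2048 * #A ^ 4 * affEnergy L * #L ^ 2) ^ ((1 : ℝ) / 3) := by ring_nf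

end EnergyBound

lemma le_nine_mul_max_of_sq_le {I a b e l : ℝ} (ha : 0 ≤ a) (hb : 0 ≤ b) (he : 0 ≤ e)
    (hl : 0 ≤ l) (h : I ^ 2 ≤ b * (l ^ 2 + 6 * (2048 * a ^ 4 * e * l ^ 2) ^ ((1 : ℝ) / 3))) :
    I ≤ 9 * max (b ^ ((1 : ℝ) / 2) * l)
      (b ^ ((1 : ℝ) / 2) * a ^ ((2 : ℝ) / 3) * e ^ ((1 : ℝ) / 6) * l ^ ((1 : ℝ) / 3)) := by
  set u := b ^ ((1 : ℝ) / 2) * l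
  set v := b ^ ((1 : ℝ) / 2) * a ^ ((2 : ℝ) / 3) * e ^ ((1 : ℝ) / 6) * l ^ ((1 : ℝ) / 3)
  have hsq {x : ℝ} (hx : 0 ≤ x) (y : ℝ) : (x ^ y) ^ 2 = x ^ (y * 2) := by
    rw [← Real.rpow_mul_natCast hx]; norm_num
  have hu : u ^ 2 = b * l ^ 2 := by
    rw [mul_pow, hsq hb]; norm_num
  have hv : v ^ 2 = b * (a ^ 4 * e * l ^ 2) ^ ((1 : ℝ) / 3) := by
    rw [Real.mul_rpow (by positivity) (sq_nonneg l), Real.mul_rpow (by positivity) he,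
      ← Real.rpow_natCast_mul ha, ← Real.rpow_natCast_mul hl, mul_pow, mul_pow, mul_pow,
      hsq hb, hsq ha, hsq he, hsq hl]
    norm_num
    ring
  have h2048 : (2048 : ℝ) ^ ((1 : ℝ) / 3) ≤ 13 :=
    calc (2048 : ℝ) ^ ((1 : ℝ) / 3) ≤ ((13 : ℝ) ^ 3) ^ ((1 : ℝ) / 3) := by gcongr; norm_num
      _ = 13 := by rw [← Real.rpow_natCast_mul (by norm_num)]; norm_num
  have hI : I ^ 2 ≤ u ^ 2 + 78 * v ^ 2 := by
    rw [hu, hv]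
    rw [mul_assoc 2048, mul_assoc 2048, Real.mul_rpow (by norm_num) (by positivity)] at h
    have := mul_le_mul_of_nonneg_right h2048
      (by positivity : 0 ≤ (a ^ 4 * (e * l ^ 2)) ^ ((1 : ℝ) / 3))
    rw [← mul_assoc] at this ⊢
    nlinarith
  have hmax : u ^ 2 + 78 * v ^ 2 ≤ (9 * max u v) ^ 2 := by
    have hu2 := pow_le_pow_left₀ (by positivity) (le_max_left u v) 2
    have hv2 := pow_le_pow_left₀ (by positivity) (le_max_right u v) 2
    nlinarith
  exact (le_abs_self I).trans (abs_le_of_sq_le_sq (hI.trans hmax) (by positivity))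

/-- **Theorem 1.9 over ℝ** (energy–incidence bound): there is an absolute constant `C`
such that for all finite `A, B ⊆ ℝ` and every finite set `L` of lines `y = ax + b` with
`a ≠ 0`, `I(A×B, L) ≤ C·max{|B|^{1/2}|L|, |B|^{1/2}|A|^{2/3}·E(L)^{1/6}·|L|^{1/3}}`. -/
theorem energy_incidence_real :
    ∃ C : ℝ, 0 < C ∧
      ∀ (A B : Finset ℝ) (L : Finset (ℝ × ℝ)), (∀ l ∈ L, l.1 ≠ 0) →
        (inc A B L : ℝ) ≤
          C * max ((B.card : ℝ) ^ ((1 : ℝ) / 2) * (L.card : ℝ))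
            ((B.card : ℝ) ^ ((1 : ℝ) / 2) * (A.card : ℝ) ^ ((2 : ℝ) / 3) *
              (affEnergy L : ℝ) ^ ((1 : ℝ) / 6) * (L.card : ℝ) ^ ((1 : ℝ) / 3)) := by
  refine ⟨9, by norm_num, fun A B L hL => le_nine_mul_max_of_sq_le (by positivity)
    (by positivity) (by positivity) (by positivity) ?_⟩
  have hrows : ∑ y ∈ B, (rowIncidences A L y : ℝ) ^ 2
      ≤ ∑ p ∈ L ×ˢ L, (#(gridOnLine A A (affQuot p)) : ℝ) := by
    exact_mod_cast sum_sq_rowIncidences_le A B hL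
  calc (inc A B L : ℝ) ^ 2 = (∑ y ∈ B, (rowIncidences A L y : ℝ)) ^ 2 := by
        rw [inc_eq_sum_rowIncidences A B hL, Nat.cast_sum]
    _ ≤ #B * ∑ y ∈ B, (rowIncidences A L y : ℝ) ^ 2 := sq_sum_le_card_mul_sum_sq
    _ ≤ #B * (#L ^ 2 + 6 * (2048 * #A ^ 4 * affEnergy L * #L ^ 2) ^ ((1 : ℝ) / 3)) := by
        gcongr
        exact hrows.trans (sum_card_gridOnLine_affQuot_le A hL)
end

section
/- Let G be a group and A a finite nonempty symmetric subset of G. Then for every integer k ≥ 4, |A^k| · |A|^(k−3) ≤ |A³|^(k−2); equivalently, writing |A³| = K·|A|, one has |A^k| ≤ K^(k−2)·|A|. -/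
open Pointwise

private lemma key_step {G : Type*} [Group G] [DecidableEq G]
    (A : Finset G) (hsym : A⁻¹ = A) (n : ℕ) (hn : 1 ≤ n) :
    A.card * (A ^ (n + 2)).card ≤ (A ^ (n + 1)).card * (A ^ 3).card := by
  have h := Finset.ruzsa_triangle_inequality_invMul_mul_mul (A ^ n) A (A ^ 2)
  have h1 : (A ^ n)⁻¹ = A ^ n := by
    rw [← inv_pow, hsym]
  rw [h1] at h
  calc A.card * (A ^ (n + 2)).card = A.card * ((A ^ n) * A ^ 2).card := by
        rw [← pow_add]
    _ ≤ (A * A ^ n).card * (A * A ^ 2).card := h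
    _ = (A ^ (n + 1)).card * (A ^ 3).card := by
        rw [← pow_succ', ← pow_succ']

/-- **Ruzsa-type inequality** (Lemma 2.1): for a finite nonempty symmetric subset `A`
of a group `G` and `k ≥ 4`, one has `|A^k|·|A|^(k-3) ≤ |A³|^(k-2)`. -/
theorem ruzsa_iterated_growth {G : Type*} [Group G] [DecidableEq G]
    (A : Finset G) (hA : A.Nonempty) (hsym : A⁻¹ = A)
    (k : ℕ) (hk : 4 ≤ k) :
    (A ^ k).card * A.card ^ (k - 3) ≤ (A ^ 3).card ^ (k - 2) := by
  have h3 : 3 ≤ k := by omega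
  clear hk
  induction k, h3 using Nat.le_induction with
  | base => simp
  | succ n hn ih =>
    have hkey := key_step A hsym (n - 1) (by omega)
    rw [show n - 1 + 2 = n + 1 by omega, show n - 1 + 1 = n by omega] at hkey
    have h1 : n + 1 - 3 = (n - 3) + 1 := by omega
    have h2 : n + 1 - 2 = (n - 2) + 1 := by omega
    rw [h1, h2, pow_succ, pow_succ]
    calc (A ^ (n + 1)).card * (A.card ^ (n - 3) * A.card)
        = (A.card * (A ^ (n + 1)).card) * A.card ^ (n - 3) := by ring
      _ ≤ ((A ^ n).card * (A ^ 3).card) * A.card ^ (n - 3) := by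
          exact Nat.mul_le_mul_right _ hkey
      _ = ((A ^ n).card * A.card ^ (n - 3)) * (A ^ 3).card := by ring
      _ ≤ (A ^ 3).card ^ (n - 2) * (A ^ 3).card :=
          Nat.mul_le_mul_right _ ih
end

section
/- Let p ≥ 5 be a prime and A a finite symmetric generating set of SL₂(F_p). Write |A³| = K·|A| and suppose |A| > 12 + 16·K·|A|^(1/3) (as real numbers). Then A·A contains an element g whose trace satisfies tr(g) ∉ {0, 2, −2}. -/
/-!
Suppose every element of `A·A` has trace in `T = {0, 2, -2}`. For `a ∈ A` this forces
`tr(a)² = tr(a²) + 2 ∈ {0, 2, 4}`, and the identity `tr(a₀ a) + tr(a₀ a⁻¹) = tr a₀ · tr a`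
shows that for a suitable `c ≠ 0` also `c · tr a ∈ T` for all `a ∈ A`. So each functional
`x ↦ tr(a x)`, `a ∈ A`, maps `S = A ∪ {c • 1}` into `T`; as `S` spans at most four dimensions,
these functionals have at most `3⁴ = 81` restrictions to `S`. Two distinct `a, b ∈ A` cannot have
the same restriction: `v = a - b` would be a nonzero nilpotent matrix with `tr(g v) = 0` for all
`g ∈ A`, so every `g ∈ A` would preserve the line `v F²`, and `A` would not generate `SL₂(F)`.
Thus `|A| ≤ 81`, whereas the size hypothesis forces `|A| ≥ 82`.
-/

open Pointwise

instance (p : ℕ) : DecidableEq (Matrix.SpecialLinearGroup (Fin 2) (ZMod p)) := by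
  unfold Matrix.SpecialLinearGroup
  infer_instance

open Matrix MatrixGroups

namespace Matrix

variable {R : Type*} [CommRing R]

lemma trace_mul_fin_two (a b : Matrix (Fin 2) (Fin 2) R) :
    trace (a * b) = a 0 0 * b 0 0 + a 0 1 * b 1 0 + a 1 0 * b 0 1 + a 1 1 * b 1 1 := by
  simp only [trace_fin_two, mul_apply, Fin.sum_univ_two]
  ring

lemma mul_mul_eq_trace_smul_sub_det_smul_fin_two (v g : Matrix (Fin 2) (Fin 2) R) :
    v * g * v = trace (g * v) • v - det v • adjugate g := by
  ext i j
  fin_cases i <;> fin_cases j <;>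
    simp [mul_apply, Fin.sum_univ_two, trace_fin_two, det_fin_two, adjugate_fin_two] <;> ring

lemma trace_mul_add_trace_mul_adjugate_fin_two (a b : Matrix (Fin 2) (Fin 2) R) :
    trace (a * b) + trace (a * adjugate b) = trace a * trace b := by
  rw [adjugate_fin_two, trace_mul_fin_two, trace_mul_fin_two, trace_fin_two, trace_fin_two]
  simp only [of_apply, cons_val', cons_val_zero, cons_val_one, empty_val', cons_val_fin_one]
  ring

lemma trace_mul_self_fin_two (a : Matrix (Fin 2) (Fin 2) R) :
    trace (a * a) = trace a ^ 2 - 2 * det a := by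
  rw [trace_mul_fin_two, det_fin_two, trace_fin_two]
  ring

lemma det_sub_fin_two (a b : Matrix (Fin 2) (Fin 2) R) :
    det (a - b) = det a + det b - trace a * trace b + trace (a * b) := by
  rw [trace_mul_fin_two]
  simp only [det_fin_two, trace_fin_two, sub_apply]
  ring

variable {K : Type*} [Field K]

lemma exists_smul_eq_of_mulVec_eq_zero {v : Matrix (Fin 2) (Fin 2) K} (hv : v ≠ 0)
    {u x : Fin 2 → K} (hu : u ≠ 0) (hvu : v *ᵥ u = 0) (hvx : v *ᵥ x = 0) :
    ∃ a : K, a • u = x := by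
  by_contra! h
  have hind : LinearIndependent K ![u, x] := (LinearIndependent.pair_iff' hu).mpr h
  have hspan : Submodule.span K (Set.range ![u, x]) = ⊤ :=
    hind.span_eq_top_of_card_eq_finrank' (by simp)
  refine hv (toLin'.injective (LinearMap.ext_on_range hspan fun i => ?_))
  fin_cases i
  exacts [by simpa [toLin'_apply] using hvu, by simpa [toLin'_apply] using hvx]

end Matrix

open scoped LinearAlgebra.Projectivization

section Borel

variable {K : Type*} [Field K]

instance : Nontrivial (ℙ K (Fin 2 → K)) := by
  refine ⟨.mk K (Pi.single 0 1) (by simp), .mk K (Pi.single 1 1) (by simp), fun h => ?_⟩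
  obtain ⟨a, ha⟩ := (Projectivization.mk_eq_mk_iff' K _ _ _ _).mp h
  simpa using congrFun ha 0

lemma stabilizer_projectivization_ne_top (ℓ : ℙ K (Fin 2 → K)) :
    MulAction.stabilizer SL(2, K) ℓ ≠ ⊤ := by
  obtain ⟨ℓ', hne⟩ := exists_ne ℓ
  obtain ⟨g, hg⟩ := MulAction.exists_smul_eq SL(2, K) ℓ ℓ'
  intro htop
  have : g • ℓ = ℓ := MulAction.mem_stabilizer_iff.mp (htop ▸ Subgroup.mem_top g)
  exact hne (hg ▸ this)

/-- With `v² = 0` and `v ≠ 0`, the identity `v g v = tr(g v) v` shows that `g` maps the image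
line of `v` into the kernel of `v`, which is that same line. -/
lemma exists_fixed_point_of_trace_mul_eq_zero {v : Matrix (Fin 2) (Fin 2) K} (hv : v ≠ 0)
    (htr : trace v = 0) (hdet : det v = 0) :
    ∃ ℓ : ℙ K (Fin 2 → K), ∀ g : SL(2, K),
      trace ((g : Matrix (Fin 2) (Fin 2) K) * v) = 0 → g • ℓ = ℓ := by
  obtain ⟨w, hw⟩ : ∃ w, v *ᵥ w ≠ 0 := by
    by_contra! h
    exact hv (toLin'.injective (LinearMap.ext fun w => by simpa using h w))
  have hvv : v * v = 0 := by
    simpa [htr, hdet] using mul_mul_eq_trace_smul_sub_det_smul_fin_two v 1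
  refine ⟨.mk K (v *ᵥ w) hw, fun g hg => ?_⟩
  have hvgv : v * g * v = 0 := by
    simpa [hg, hdet] using mul_mul_eq_trace_smul_sub_det_smul_fin_two v g
  obtain ⟨a, ha⟩ := exists_smul_eq_of_mulVec_eq_zero hv hw (x := g *ᵥ (v *ᵥ w))
    (by rw [mulVec_mulVec, hvv, zero_mulVec])
    (by rw [mulVec_mulVec, mulVec_mulVec, hvgv, zero_mulVec])
  rw [Projectivization.smul_mk, Projectivization.mk_eq_mk_iff']
  exact ⟨a, ha⟩

lemma closure_ne_top_of_forall_trace_mul_eq_zero (A : Set SL(2, K))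
    {v : Matrix (Fin 2) (Fin 2) K} (hv : v ≠ 0) (htr : trace v = 0) (hdet : det v = 0)
    (hA : ∀ g ∈ A, trace ((g : Matrix (Fin 2) (Fin 2) K) * v) = 0) :
    Subgroup.closure A ≠ ⊤ := by
  obtain ⟨ℓ, hℓ⟩ := exists_fixed_point_of_trace_mul_eq_zero hv htr hdet
  refine ne_top_of_le_ne_top (stabilizer_projectivization_ne_top ℓ) ?_
  exact (Subgroup.closure_le _).mpr fun g hg => hℓ g (hA g hg)

end Borel

open Module in
theorem card_le_pow_finrank_of_injOn_eqOn {K V ι : Type*} [Field K] [AddCommGroup V]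
    [Module K V] [FiniteDimensional K V] (S : Set V) {T : Finset K} (hT : T.Nonempty)
    (X : Finset ι) (φ : ι → V →ₗ[K] K) (hφ : ∀ i ∈ X, ∀ s ∈ S, φ i s ∈ T)
    (hinj : ∀ i ∈ X, ∀ j ∈ X, Set.EqOn (φ i) (φ j) S → i = j) :
    X.card ≤ T.card ^ finrank K V := by
  classical
  obtain ⟨Y, hYS, hspan, hY⟩ := exists_linearIndependent K S
  have : Fintype Y := hY.setFinite.fintype
  calc X.card ≤ (Fintype.piFinset fun _ : Y => T).card := by
        refine Finset.card_le_card_of_injOn (fun i y => φ i y)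
          (fun i hi => Fintype.mem_piFinset.mpr fun y => hφ i hi y (hYS y.2)) ?_
        intro i hi j hj hij
        exact hinj i hi j hj fun s hs => LinearMap.eqOn_span (fun y hy => congrFun hij ⟨y, hy⟩)
          (hspan ▸ Submodule.subset_span hs)
    _ = T.card ^ Fintype.card Y := by simp
    _ ≤ T.card ^ finrank K V := pow_le_pow_right₀ hT.card_pos hY.fintype_card_le_finrank

section Traces

variable {F : Type*} [Field F] [DecidableEq F]

local notation:1024 "↑ₘ" A:1024 => ((A : SL(2, F)) : Matrix (Fin 2) (Fin 2) F)

lemma add_mem_of_sq_mem (h2 : (2 : F) ≠ 0) {x y : F} (hx : x ∈ ({0, 2, -2} : Finset F))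
    (hy : y ∈ ({0, 2, -2} : Finset F)) (hsq : (x + y) ^ 2 ∈ ({0, 4, 8} : Finset F)) :
    x + y ∈ ({0, 2, -2} : Finset F) := by
  have h4 : (2 : F) * 2 ≠ 0 := mul_ne_zero h2 h2
  simp only [Finset.mem_insert, Finset.mem_singleton] at hx hy hsq ⊢
  rcases hx with rfl | rfl | rfl <;> rcases hy with rfl | rfl | rfl <;> norm_num at hsq ⊢
  all_goals
    rcases hsq with h | h | h
    · exact absurd (by linear_combination h) (mul_ne_zero h4 h4)
    · first
        | exact Or.inr (Or.inr (mul_left_cancel₀ h2 (by linear_combination h)))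
        | exact Or.inr (Or.inl (mul_left_cancel₀ h2 (by linear_combination -h)))
    · exact absurd (by linear_combination h) (mul_ne_zero h2 h4)

lemma trace_sq_mem_of_trace_mul_self_mem {a : SL(2, F)}
    (ha : trace ↑ₘ(a * a) ∈ ({0, 2, -2} : Finset F)) :
    trace ↑ₘa ^ 2 ∈ ({2, 4, 0} : Finset F) := by
  have h := trace_mul_self_fin_two ↑ₘa
  rw [Matrix.SpecialLinearGroup.det_coe, ← Matrix.SpecialLinearGroup.coe_mul] at h
  simp only [Finset.mem_insert, Finset.mem_singleton] at ha ⊢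
  rcases ha with h' | h' | h' <;> rw [h'] at h
  · exact Or.inl (by linear_combination -h)
  · exact Or.inr (Or.inl (by linear_combination -h))
  · exact Or.inr (Or.inr (by linear_combination -h))

lemma exists_ne_zero_mul_trace_mem (h2 : (2 : F) ≠ 0) {A : Finset SL(2, F)} (hsym : A⁻¹ = A)
    (hA : ∀ g ∈ A * A, trace ↑ₘg ∈ ({0, 2, -2} : Finset F)) :
    ∃ c : F, c ≠ 0 ∧ ∀ a ∈ A, c * trace ↑ₘa ∈ ({0, 2, -2} : Finset F) := by
  have hsq : ∀ a ∈ A, trace ↑ₘa ^ 2 ∈ ({2, 4, 0} : Finset F) :=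
    fun a ha => trace_sq_mem_of_trace_mul_self_mem (hA _ (Finset.mul_mem_mul ha ha))
  by_cases hall : ∀ a ∈ A, trace ↑ₘa ∈ ({0, 2, -2} : Finset F)
  · exact ⟨1, one_ne_zero, by simpa using hall⟩
  push Not at hall
  obtain ⟨a₀, ha₀, hna₀⟩ := hall
  have hsq₀ : trace ↑ₘa₀ ^ 2 = 2 := by
    have h := hsq a₀ ha₀
    simp only [Finset.mem_insert, Finset.mem_singleton, not_or] at h hna₀
    rcases h with h | h | h
    · exact h
    · rw [show (4 : F) = 2 ^ 2 by norm_num, sq_eq_sq_iff_eq_or_eq_neg] at h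
      exact absurd h (not_or.mpr hna₀.2)
    · exact absurd (pow_eq_zero_iff two_ne_zero |>.mp h) hna₀.1
  refine ⟨trace ↑ₘa₀, fun h => h2 (by rw [← hsq₀, h]; ring), fun a ha => ?_⟩
  have hsum : trace ↑ₘ(a₀ * a) + trace ↑ₘ(a₀ * a⁻¹) = trace ↑ₘa₀ * trace ↑ₘa := by
    rw [Matrix.SpecialLinearGroup.coe_mul, Matrix.SpecialLinearGroup.coe_mul,
      Matrix.SpecialLinearGroup.coe_inv, trace_mul_add_trace_mul_adjugate_fin_two]
  rw [← hsum]
  have ha' : a⁻¹ ∈ A := hsym ▸ Finset.inv_mem_inv ha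
  refine add_mem_of_sq_mem h2 (hA _ (Finset.mul_mem_mul ha₀ ha))
    (hA _ (Finset.mul_mem_mul ha₀ ha')) ?_
  rw [hsum, mul_pow, hsq₀]
  have h := hsq a ha
  simp only [Finset.mem_insert, Finset.mem_singleton] at h ⊢
  rcases h with h | h | h <;> rw [h] <;> norm_num

lemma eq_of_forall_trace_mul_eq {A : Set SL(2, F)} (hgen : Subgroup.closure A = ⊤)
    {a b : SL(2, F)} (hb : b ∈ A) (htr : trace ↑ₘa = trace ↑ₘb)
    (hA : ∀ g ∈ A, trace (↑ₘa * ↑ₘg) = trace (↑ₘb * ↑ₘg)) : a = b := by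
  by_contra hne
  refine closure_ne_top_of_forall_trace_mul_eq_zero A (v := ↑ₘa - ↑ₘb)
    (fun h => hne (Subtype.ext (sub_eq_zero.mp h))) (by rw [trace_sub, htr, sub_self]) ?_
    (fun g hg => ?_) hgen
  · have hbb := trace_mul_self_fin_two ↑ₘb
    rw [det_sub_fin_two, hA b hb, hbb, htr, Matrix.SpecialLinearGroup.det_coe,
      Matrix.SpecialLinearGroup.det_coe]
    ring
  · rw [mul_sub, trace_sub, trace_mul_comm, trace_mul_comm ↑ₘg, hA g hg, sub_self]

theorem card_le_eighty_one_of_forall_trace_mem (h2 : (2 : F) ≠ 0) {A : Finset SL(2, F)}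
    (hsym : A⁻¹ = A) (hgen : Subgroup.closure (A : Set SL(2, F)) = ⊤)
    (hA : ∀ g ∈ A * A, trace ↑ₘg ∈ ({0, 2, -2} : Finset F)) :
    A.card ≤ 81 := by
  obtain ⟨c, hc, hcA⟩ := exists_ne_zero_mul_trace_mem h2 hsym hA
  let S : Set (Matrix (Fin 2) (Fin 2) F) := insert (c • 1) ((fun g : SL(2, F) => ↑ₘg) '' A)
  let φ (a : SL(2, F)) : Matrix (Fin 2) (Fin 2) F →ₗ[F] F :=
    (traceLinearMap (Fin 2) F F).comp (LinearMap.mulLeft F ↑ₘa)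
  have φ_apply (a : SL(2, F)) (x : Matrix (Fin 2) (Fin 2) F) : φ a x = trace (↑ₘa * x) := rfl
  have hbound := card_le_pow_finrank_of_injOn_eqOn S (T := {0, 2, -2}) (by simp) A φ ?_ ?_
  · calc A.card ≤ ({0, 2, -2} : Finset F).card ^ 4 := by
          simpa [Module.finrank_matrix] using hbound
      _ ≤ 3 ^ 4 := Nat.pow_le_pow_left Finset.card_le_three 4
  · rintro a ha _ (rfl | ⟨b, hb, rfl⟩)
    · simpa [φ_apply, mul_comm c] using hcA a ha
    · simpa [φ_apply] using hA _ (Finset.mul_mem_mul ha hb)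
  · intro a _ b hb hab
    refine eq_of_forall_trace_mul_eq hgen hb ?_ fun g hg =>
      hab (Set.mem_insert_of_mem _ ⟨g, hg, rfl⟩)
    simpa [φ_apply, hc] using hab (Set.mem_insert _ _)

end Traces

lemma eighty_one_lt_of_add_mul_rpow_lt {x : ℝ} (hx : 0 ≤ x)
    (h : 12 + 16 * x ^ (1 / 3 : ℝ) < x) : 81 < x := by
  set y := x ^ (1 / 3 : ℝ)
  have hy : 0 ≤ y := Real.rpow_nonneg hx _
  have hy3 : y ^ 3 = x := by
    rw [← Real.rpow_natCast, ← Real.rpow_mul hx]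
    norm_num
  rw [← hy3] at h ⊢
  -- `433 / 100` lies just below the positive root `≈ 4.3325` of `y³ = 16 y + 12`.
  nlinarith [sq_nonneg (y - 433 / 100), mul_nonneg hy (sq_nonneg (y - 433 / 100))]

lemma eighty_one_lt_card {G : Type*} [Group G] [DecidableEq G] {A : Finset G} {K : ℝ}
    (hK : ((A ^ 3).card : ℝ) = K * A.card)
    (hsize : 12 + 16 * K * (A.card : ℝ) ^ ((1 : ℝ) / 3) < A.card) :
    81 < A.card := by
  have hne : A.Nonempty := by
    rw [Finset.nonempty_iff_ne_empty]
    rintro rfl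
    norm_num at hsize
  have hpos : (0 : ℝ) < A.card := by exact_mod_cast hne.card_pos
  have hK1 : 1 ≤ K := by
    have : (A.card : ℝ) ≤ (A ^ 3).card := by
      rw [pow_succ]
      exact_mod_cast Finset.card_le_card_mul_left hne.pow
    nlinarith
  have hroot : 0 ≤ (A.card : ℝ) ^ ((1 : ℝ) / 3) := Real.rpow_nonneg hpos.le _
  exact_mod_cast eighty_one_lt_of_add_mul_rpow_lt hpos.le (by nlinarith)

/-- **Lemma 2.3** (escape from subvarieties): let `p ≥ 5` be prime, `A` a finite
symmetric generating set of `SL₂(F_p)`, write `|A³| = K·|A|` and suppose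
`|A| > 12 + 16·K·|A|^{1/3}`. Then `A·A` contains an element whose trace is not in
`{0, 2, -2}` (i.e. a regular semisimple element of nonzero trace). -/
theorem SL2_escape
    (p : ℕ) (hp : p.Prime) (hp5 : 5 ≤ p)
    (A : Finset (Matrix.SpecialLinearGroup (Fin 2) (ZMod p)))
    (hsym : A⁻¹ = A)
    (hgen : Subgroup.closure (A : Set (Matrix.SpecialLinearGroup (Fin 2) (ZMod p))) = ⊤)
    (K : ℝ) (hK : ((A ^ 3).card : ℝ) = K * (A.card : ℝ))
    (hsize : 12 + 16 * K * (A.card : ℝ) ^ ((1 : ℝ) / 3) < (A.card : ℝ)) :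
    ∃ g ∈ A * A,
      Matrix.trace (g : Matrix (Fin 2) (Fin 2) (ZMod p)) ≠ 0 ∧
      Matrix.trace (g : Matrix (Fin 2) (Fin 2) (ZMod p)) ≠ 2 ∧
      Matrix.trace (g : Matrix (Fin 2) (Fin 2) (ZMod p)) ≠ -2 := by
  have : Fact p.Prime := ⟨hp⟩
  have : Fact (Nat.Prime 2) := ⟨Nat.prime_two⟩
  have h2 : (2 : ZMod p) ≠ 0 := by exact_mod_cast ZMod.prime_ne_zero p 2 (by omega)
  by_contra! hcon
  have hbound := card_le_eighty_one_of_forall_trace_mem h2 hsym hgen fun g hg => by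
    have := hcon g hg
    simp only [Finset.mem_insert, Finset.mem_singleton]
    tauto
  have := eighty_one_lt_card hK hsize
  omega
end

section
/- Let p be a prime and A a finite symmetric generating set of SL₂(F_p) with |A³| = K·|A|. Then for every h ∈ SL₂(F_p), every γ ∈ F_p*, and every integer k ≥ 1: |(h·l_γ·h⁻¹) ∩ A^k| ≤ 2·|A^(3k+2)|^(1/3) ≤ 2·K^k·|A|^(1/3). -/
/-!
Choose `a ∈ A` whose conjugate `a' = h⁻¹ a h` is not upper triangular; it exists because `A`
generates `SL₂(F_p)`, which is not contained in the conjugate `h B h⁻¹` of the upper triangular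
subgroup `B`. Let `T` be the set of `t` with `h u_t h⁻¹ ∈ A^k`, where `u_t = [[γ, t], [0, γ⁻¹]]`.
The map `(t₁, t₂, t₃) ↦ h u_{t₁} a' u_{t₂} a' u_{t₃} h⁻¹` sends `T³` into `A^(3k+2)`.
The lower left entry of `u_{t₁} a' u_{t₂} a' u_{t₃}` is that of `a' u_{t₂} a'`, an affine function
of `t₂` with slope `a'₁₀² ≠ 0`, so it recovers `t₂`; as long as it is nonzero, which fails for
at most one `t₂`, the diagonal entries then recover `t₁` and `t₃`. Hence
`|T|² (|T| - 1) ≤ |A^(3k+2)|`, so `|T| ≤ 2 |A^(3k+2)|^(1/3)`. The second inequality is the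
bound `|A^m| ≤ K^(m-2) |A|` for symmetric sets of tripling `K`.
-/

open Pointwise

open Finset Matrix MatrixGroups

namespace Matrix.SpecialLinearGroup

variable {R : Type*} [CommRing R]

variable (R) in
def upperTriangular : Subgroup SL(2, R) where
  carrier := {g | g 1 0 = 0}
  one_mem' := by simp
  mul_mem' {g g'} hg hg' := by
    simp_all [coe_mul, mul_apply, Fin.sum_univ_two]
  inv_mem' {g} hg := by
    simp_all [coe_inv, adjugate_fin_two]

theorem upperTriangular_ne_top [Nontrivial R] : upperTriangular R ≠ ⊤ := by
  intro htop
  let u : SL(2, R) := ⟨!![1, 0; 1, 1], by simp⟩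
  exact one_ne_zero (htop ▸ Subgroup.mem_top u : u ∈ upperTriangular R)

theorem exists_mem_conj_apply_one_zero_ne_zero [Nontrivial R] {A : Set SL(2, R)}
    (hA : Subgroup.closure A = ⊤) (h : SL(2, R)) : ∃ a ∈ A, (h⁻¹ * a * h) 1 0 ≠ 0 := by
  by_contra! hc
  refine upperTriangular_ne_top (R := R) (eq_top_iff.2 fun g _ => ?_)
  have hle : Subgroup.closure A ≤ (upperTriangular R).comap (MulAut.conj h⁻¹).toMonoidHom :=
    (Subgroup.closure_le _).2 fun a ha => show (h⁻¹ * a * h⁻¹⁻¹) 1 0 = 0 by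
      rw [inv_inv]; exact hc a ha
  have hg := hle (hA ▸ Subgroup.mem_top (h * g * h⁻¹))
  rw [Subgroup.mem_comap] at hg
  convert hg using 1
  simp [mul_assoc]

def upperLine (γ : Rˣ) (t : R) : SL(2, R) :=
  ⟨!![(γ : R), t; 0, ((γ⁻¹ : Rˣ) : R)], by simp [det_fin_two_of]⟩

variable {γ : Rˣ}

theorem coe_upperLine (t : R) :
    (upperLine γ t : Matrix (Fin 2) (Fin 2) R) = !![(γ : R), t; 0, ((γ⁻¹ : Rˣ) : R)] :=
  rfl

theorem upperLine_injective (γ : Rˣ) : Function.Injective (upperLine γ) := fun s t hst => by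
  simpa [coe_upperLine] using congr($hst 0 1)

theorem upperLine_mul_mul_upperLine_apply_one_zero (s t : R) (X : SL(2, R)) :
    (upperLine γ s * X * upperLine γ t) 1 0 = X 1 0 := by
  simp only [coe_mul, coe_upperLine, mul_apply, Fin.sum_univ_two, of_apply, cons_val',
    cons_val_zero, cons_val_one, cons_val_fin_one]
  linear_combination X 1 0 * γ.inv_mul

theorem upperLine_mul_mul_upperLine_apply_zero_zero (s t : R) (X : SL(2, R)) :
    (upperLine γ s * X * upperLine γ t) 0 0 = γ * (γ * X 0 0 + s * X 1 0) := by
  simp only [coe_mul, coe_upperLine, mul_apply, Fin.sum_univ_two, of_apply, cons_val',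
    cons_val_zero, cons_val_one, cons_val_fin_one]
  ring

theorem upperLine_mul_mul_upperLine_apply_one_one (s t : R) (X : SL(2, R)) :
    (upperLine γ s * X * upperLine γ t) 1 1 = (γ⁻¹ : Rˣ) * (X 1 0 * t + X 1 1 * (γ⁻¹ : Rˣ)) := by
  simp only [coe_mul, coe_upperLine, mul_apply, Fin.sum_univ_two, of_apply, cons_val',
    cons_val_zero, cons_val_one, cons_val_fin_one]
  ring

theorem mul_upperLine_mul_apply_one_zero (M : SL(2, R)) (t : R) :
    (M * upperLine γ t * M) 1 0 = M 1 0 ^ 2 * t + M 1 0 * (γ * M 0 0 + (γ⁻¹ : Rˣ) * M 1 1) := by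
  simp only [coe_mul, coe_upperLine, mul_apply, Fin.sum_univ_two, of_apply, cons_val',
    cons_val_zero, cons_val_one, cons_val_fin_one]
  ring

section IsDomain

variable [IsDomain R]

theorem upperLine_mul_mul_upperLine_injective {X : SL(2, R)} (hX : X 1 0 ≠ 0) :
    Function.Injective fun st : R × R => upperLine γ st.1 * X * upperLine γ st.2 := by
  rintro ⟨s₁, s₂⟩ ⟨t₁, t₂⟩ heq
  have h₀₀ := congr($heq 0 0)
  have h₁₁ := congr($heq 1 1)
  simp only [upperLine_mul_mul_upperLine_apply_zero_zero,
    upperLine_mul_mul_upperLine_apply_one_one] at h₀₀ h₁₁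
  have h₁ : s₁ * X 1 0 = t₁ * X 1 0 := by
    simpa using mul_left_cancel₀ γ.ne_zero h₀₀
  have h₂ : X 1 0 * s₂ = X 1 0 * t₂ := by
    simpa using mul_left_cancel₀ γ⁻¹.ne_zero h₁₁
  rw [mul_right_cancel₀ hX h₁, mul_left_cancel₀ hX h₂]

theorem mul_upperLine_mul_apply_one_zero_injective {M : SL(2, R)} (hM : M 1 0 ≠ 0) :
    Function.Injective fun t => (M * upperLine γ t * M) 1 0 := fun s t hst => by
  simp only [mul_upperLine_mul_apply_one_zero] at hst
  exact mul_left_cancel₀ (pow_ne_zero 2 hM) (add_right_cancel hst)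

theorem injOn_upperLine_mul_mul_upperLine_mul_mul_upperLine {M : SL(2, R)} (hM : M 1 0 ≠ 0) :
    Set.InjOn
      (fun t : R × R × R =>
        upperLine γ t.1 * M * upperLine γ t.2.1 * M * upperLine γ t.2.2)
      {t | (M * upperLine γ t.2.1 * M) 1 0 ≠ 0} := by
  rintro ⟨s₁, s₂, s₃⟩ hs ⟨t₁, t₂, t₃⟩ - heq
  have heq' : upperLine γ s₁ * (M * upperLine γ s₂ * M) * upperLine γ s₃ =
      upperLine γ t₁ * (M * upperLine γ t₂ * M) * upperLine γ t₃ := by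
    simpa only [mul_assoc] using heq
  have h₁₀ := congr($heq' 1 0)
  rw [upperLine_mul_mul_upperLine_apply_one_zero, upperLine_mul_mul_upperLine_apply_one_zero]
    at h₁₀
  obtain rfl : s₂ = t₂ := mul_upperLine_mul_apply_one_zero_injective hM h₁₀
  obtain ⟨rfl, rfl⟩ := Prod.ext_iff.1 <|
    upperLine_mul_mul_upperLine_injective (γ := γ) (a₁ := (s₁, s₃)) (a₂ := (t₁, t₃)) hs heq'
  rfl

end IsDomain

end Matrix.SpecialLinearGroup

open Matrix.SpecialLinearGroup

theorem Finset.card_le_card_filter_ne_add_one {α β : Type*} [DecidableEq β] {f : α → β}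
    (hf : Function.Injective f) (s : Finset α) (b : β) : #s ≤ #(s.filter (f · ≠ b)) + 1 := by
  have hbad : #(s.filter fun x => ¬f x ≠ b) ≤ 1 :=
    Finset.card_le_one.2 fun x hx y hy => hf (by simp_all)
  have := s.card_filter_add_card_filter_not (f · ≠ b)
  omega

theorem Finset.mul_mul_mul_mul_mem_pow {G : Type*} [Monoid G] [DecidableEq G]
    {A : Finset G} {a x y z : G} {k : ℕ} (ha : a ∈ A) (hx : x ∈ A ^ k) (hy : y ∈ A ^ k)
    (hz : z ∈ A ^ k) : x * a * y * a * z ∈ A ^ (3 * k + 2) := by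
  rw [show 3 * k + 2 = k + 1 + k + 1 + k by ring, pow_add, pow_add, pow_add, pow_add, pow_one]
  exact mul_mem_mul (mul_mem_mul (mul_mem_mul (mul_mem_mul hx ha) hy) ha) hz

theorem card_pow_rpow_le_of_small_tripling {G : Type*} [Group G] [DecidableEq G]
    {A : Finset G} {K : ℝ} (hA : A.Nonempty) (hsym : A⁻¹ = A) (hK : #(A ^ 3) ≤ K * #A)
    {k : ℕ} (hk : 1 ≤ k) :
    (#(A ^ (3 * k + 2)) : ℝ) ^ ((1 : ℝ) / 3) ≤ K ^ k * (#A : ℝ) ^ ((1 : ℝ) / 3) := by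
  have hK₀ : 0 ≤ K := by
    have : (0 : ℝ) < #A := by exact_mod_cast hA.card_pos
    nlinarith [(#(A ^ 3)).cast_nonneg (α := ℝ)]
  have hpow : (#(A ^ (3 * k + 2)) : ℝ) ≤ (K ^ k) ^ 3 * #A := by
    simpa [← pow_mul, mul_comm k] using
      small_pow_of_small_tripling (m := 3 * k + 2) (by omega) hK hsym
  calc (#(A ^ (3 * k + 2)) : ℝ) ^ ((1 : ℝ) / 3)
      ≤ ((K ^ k) ^ 3 * #A) ^ ((1 : ℝ) / 3) := by gcongr
    _ = K ^ k * (#A : ℝ) ^ ((1 : ℝ) / 3) := by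
      rw [Real.mul_rpow (by positivity) (by positivity), one_div,
        show ((3 : ℝ)⁻¹) = ((3 : ℕ) : ℝ)⁻¹ by norm_num,
        Real.pow_rpow_inv_natCast (by positivity) (by norm_num)]

theorem natCast_le_two_mul_rpow_one_third {n N : ℕ} (h : n ^ 2 * (n - 1) ≤ N) (hN : 0 < N) :
    (n : ℝ) ≤ 2 * (N : ℝ) ^ ((1 : ℝ) / 3) := by
  have hN₁ : (1 : ℝ) ≤ (N : ℝ) ^ ((1 : ℝ) / 3) :=
    Real.one_le_rpow (by exact_mod_cast hN) (by norm_num)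
  rcases le_or_gt n 1 with hn | hn
  · have : (n : ℝ) ≤ 1 := by exact_mod_cast hn
    linarith
  have hn3 : n ^ 3 ≤ 2 * N := by
    calc n ^ 3 ≤ n ^ 2 * (2 * (n - 1)) := by rw [pow_succ]; gcongr; omega
      _ ≤ 2 * N := by rw [mul_left_comm]; gcongr
  have hcube : ((N : ℝ) ^ ((1 : ℝ) / 3)) ^ 3 = N := by
    rw [one_div, show (3 : ℝ) = ((3 : ℕ) : ℝ) by norm_num,
      Real.rpow_inv_natCast_pow (by positivity) (by norm_num)]
  refine le_of_pow_le_pow_left₀ (n := 3) (by norm_num) (by positivity) ?_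
  rw [mul_pow, hcube]
  exact_mod_cast hn3.trans (by omega)

section Field

variable {F : Type*} [Field F] [Fintype F] [DecidableEq SL(2, F)]

def conjLineSlice (S : Finset SL(2, F)) (h : SL(2, F)) (γ : Fˣ) : Finset F :=
  univ.filter fun t => h * upperLine γ t * h⁻¹ ∈ S

theorem ncard_conjLine_inter_eq_card_conjLineSlice (S : Finset SL(2, F)) (h : SL(2, F))
    (γ : Fˣ) :
    Set.ncard {x : SL(2, F) |
        (∃ g : SL(2, F),
          (∃ t : F, (g : Matrix (Fin 2) (Fin 2) F) = !![(γ : F), t; 0, ((γ⁻¹ : Fˣ) : F)]) ∧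
          x = h * g * h⁻¹) ∧ x ∈ S} = #(conjLineSlice S h γ) := by
  have hset : {x : SL(2, F) |
        (∃ g : SL(2, F),
          (∃ t : F, (g : Matrix (Fin 2) (Fin 2) F) = !![(γ : F), t; 0, ((γ⁻¹ : Fˣ) : F)]) ∧
          x = h * g * h⁻¹) ∧ x ∈ S} =
      (fun t => h * upperLine γ t * h⁻¹) '' (conjLineSlice S h γ : Set F) := by
    ext x
    simp only [conjLineSlice, Set.mem_image, coe_filter, mem_univ, true_and]
    constructor
    · rintro ⟨⟨g, ⟨t, hg⟩, rfl⟩, hx⟩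
      obtain rfl : g = upperLine γ t := Subtype.ext hg
      exact ⟨t, hx, rfl⟩
    · rintro ⟨t, ht, rfl⟩
      exact ⟨⟨upperLine γ t, ⟨t, coe_upperLine t⟩, rfl⟩, ht⟩
  have hinj : Function.Injective fun t => h * upperLine γ t * h⁻¹ :=
    (MulAut.conj h).injective.comp (upperLine_injective γ)
  rw [hset, Set.ncard_image_of_injective _ hinj, Set.ncard_coe_finset]

theorem sq_mul_pred_card_conjLineSlice_le [DecidableEq F] {A : Finset SL(2, F)}
    {a h : SL(2, F)} (haA : a ∈ A) (ha : (h⁻¹ * a * h) 1 0 ≠ 0) (γ : Fˣ) (k : ℕ) :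
    #(conjLineSlice (A ^ k) h γ) ^ 2 * (#(conjLineSlice (A ^ k) h γ) - 1) ≤
      #(A ^ (3 * k + 2)) := by
  set M := h⁻¹ * a * h
  set T := conjLineSlice (A ^ k) h γ
  set T' := T.filter fun t => (M * upperLine γ t * M) 1 0 ≠ 0
  have hT' : #T ≤ #T' + 1 :=
    card_le_card_filter_ne_add_one (mul_upperLine_mul_apply_one_zero_injective ha) T 0
  have hmaps : ∀ t ∈ T ×ˢ T' ×ˢ T,
      h * (upperLine γ t.1 * M * upperLine γ t.2.1 * M * upperLine γ t.2.2) * h⁻¹ ∈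
        A ^ (3 * k + 2) := by
    rintro ⟨t₁, t₂, t₃⟩ ht
    simp only [T', T, conjLineSlice, mem_product, mem_filter, mem_univ, true_and] at ht
    convert mul_mul_mul_mul_mem_pow haA ht.1 ht.2.1.1 ht.2.2 using 1
    simp only [M]
    group
  have hinj : Set.InjOn
      (fun t : F × F × F =>
        h * (upperLine γ t.1 * M * upperLine γ t.2.1 * M * upperLine γ t.2.2) * h⁻¹)
      (T ×ˢ T' ×ˢ T : Finset _) := by
    refine Set.InjOn.comp (MulAut.conj h).injective.injOn
      ((injOn_upperLine_mul_mul_upperLine_mul_mul_upperLine ha).mono ?_) (Set.mapsTo_univ _ _)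
    intro t ht
    simp only [coe_product, Set.mem_prod, coe_filter, T'] at ht
    exact ht.2.1.2
  calc #T ^ 2 * (#T - 1) ≤ #T * (#T' * #T) := by
        rw [sq, mul_assoc, mul_comm #T (#T - 1)]; gcongr; omega
    _ = #(T ×ˢ T' ×ˢ T) := by simp only [card_product]
    _ ≤ #(A ^ (3 * k + 2)) := card_le_card_of_injOn _ hmaps hinj

end Field

/-- **Lemma 2.4** (Larsen–Pink type bound for lines): let `p` be prime, `A` a finite
symmetric generating set of `SL₂(F_p)` with `|A³| = K·|A|`. Then for every `h ∈ SL₂(F_p)`,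
every `γ ∈ F_p*`, and every `k ≥ 1`:
`|(h·l_γ·h⁻¹) ∩ A^k| ≤ 2·|A^{3k+2}|^{1/3} ≤ 2·K^k·|A|^{1/3}`,
where `l_γ = {[[γ, t], [0, γ⁻¹]] : t ∈ F_p}`. -/
theorem SL2_line_intersection
    (p : ℕ) (hp : p.Prime)
    (A : Finset (Matrix.SpecialLinearGroup (Fin 2) (ZMod p)))
    (hsym : A⁻¹ = A)
    (hgen : Subgroup.closure (A : Set (Matrix.SpecialLinearGroup (Fin 2) (ZMod p))) = ⊤)
    (K : ℝ) (hK : ((A ^ 3).card : ℝ) = K * (A.card : ℝ))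
    (h : Matrix.SpecialLinearGroup (Fin 2) (ZMod p))
    (γ : (ZMod p)ˣ) (k : ℕ) (hk : 1 ≤ k) :
    (Set.ncard {x : Matrix.SpecialLinearGroup (Fin 2) (ZMod p) |
        (∃ g : Matrix.SpecialLinearGroup (Fin 2) (ZMod p),
          (∃ t : ZMod p, (g : Matrix (Fin 2) (Fin 2) (ZMod p)) =
            !![(γ : ZMod p), t; 0, ((γ⁻¹ : (ZMod p)ˣ) : ZMod p)]) ∧
          x = h * g * h⁻¹) ∧ x ∈ A ^ k} : ℝ)
      ≤ 2 * ((A ^ (3 * k + 2)).card : ℝ) ^ ((1 : ℝ) / 3) ∧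
    2 * ((A ^ (3 * k + 2)).card : ℝ) ^ ((1 : ℝ) / 3)
      ≤ 2 * K ^ k * (A.card : ℝ) ^ ((1 : ℝ) / 3) := by
  have := Fact.mk hp
  obtain ⟨a, haA, ha⟩ := exists_mem_conj_apply_one_zero_ne_zero hgen h
  have hA : A.Nonempty := ⟨a, haA⟩
  rw [ncard_conjLine_inter_eq_card_conjLineSlice, mul_assoc 2]
  exact ⟨natCast_le_two_mul_rpow_one_third (sq_mul_pred_card_conjLineSlice_le haA ha γ k)
      hA.pow.card_pos,
    by gcongr; exact card_pow_rpow_le_of_small_tripling hA hsym hK.le hk⟩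
end

section
/- Let G be any group, A ⊆ G a finite nonempty subset, and g ∈ G. Then there exists a₀ ∈ A such that |A| ≤ |Conj(g) ∩ A g A⁻¹| · |Stab(g) ∩ a₀⁻¹A|. -/
/-- **Lemma 2.8** (orbit–stabiliser counting): for any group `G`, any finite nonempty
`A ⊆ G` and any `g ∈ G`, there is `a₀ ∈ A` with
`|A| ≤ |Conj(g) ∩ A·g·A⁻¹| · |Stab(g) ∩ a₀⁻¹A|`. -/
theorem orbit_stabiliser_count {G : Type*} [Group G]
    (A : Finset G) (hA : A.Nonempty) (g : G) :
    ∃ a₀ ∈ A,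
      A.card ≤
        Set.ncard ({x : G | ∃ h : G, x = h * g * h⁻¹} ∩
            {x : G | ∃ a ∈ A, ∃ b ∈ A, x = a * g * b⁻¹}) *
        Set.ncard ({x : G | x * g = g * x} ∩ ((fun y => a₀⁻¹ * y) '' (A : Set G))) := by
  classical
  set f : G → G := fun a => a * g * a⁻¹ with hf
  set B := A.image f with hB
  have hBne : B.Nonempty := hA.image f
  obtain ⟨b, hbB, hmax⟩ :=
    B.exists_max_image (fun b => (A.filter (fun a => f a = b)).card) hBne
  obtain ⟨a₀, ha₀A, ha₀b⟩ := Finset.mem_image.mp hbB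
  refine ⟨a₀, ha₀A, ?_⟩
  set F := A.filter (fun a => f a = f a₀) with hF
  have hcard : A.card ≤ B.card * F.card := by
    have hsum := Finset.card_eq_sum_card_fiberwise
      (f := f) (s := A) (t := B) (fun a ha => Finset.mem_image_of_mem f ha)
    rw [hsum]
    calc ∑ x ∈ B, (A.filter (fun a => f a = x)).card
        ≤ ∑ _x ∈ B, F.card := by
          refine Finset.sum_le_sum (fun x hx => ?_)
          rw [hF, ha₀b]; exact hmax x hx
      _ = B.card * F.card := by rw [Finset.sum_const, smul_eq_mul]
  -- First factor
  set S1 : Set G := {x : G | ∃ h : G, x = h * g * h⁻¹} ∩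
      {x : G | ∃ a ∈ A, ∃ b ∈ A, x = a * g * b⁻¹} with hS1
  have hS1fin : S1.Finite := by
    have : S1 ⊆ (fun p : G × G => p.1 * g * p.2⁻¹) '' ((A : Set G) ×ˢ (A : Set G)) := by
      rintro x ⟨-, a, ha, c, hc, rfl⟩
      exact ⟨(a, c), ⟨ha, hc⟩, rfl⟩
    exact Set.Finite.subset (((A.finite_toSet.prod A.finite_toSet).image _)) this
  have hBsub : (B : Set G) ⊆ S1 := by
    intro x hx
    obtain ⟨a, ha, rfl⟩ := Finset.mem_image.mp hx
    exact ⟨⟨a, rfl⟩, a, ha, a, ha, rfl⟩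
  have hB1 : B.card ≤ S1.ncard := by
    have := Set.ncard_le_ncard hBsub hS1fin
    simpa using this
  -- Second factor
  set S2 : Set G := {x : G | x * g = g * x} ∩ ((fun y => a₀⁻¹ * y) '' (A : Set G)) with hS2
  have hS2fin : S2.Finite :=
    Set.Finite.subset (A.finite_toSet.image _) Set.inter_subset_right
  set F' := F.image (fun a => a₀⁻¹ * a) with hF'
  have hF'card : F'.card = F.card :=
    Finset.card_image_of_injective _ (mul_right_injective _)
  have hF'sub : (F' : Set G) ⊆ S2 := by
    intro x hx
    obtain ⟨a, haF, rfl⟩ := Finset.mem_image.mp hx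
    obtain ⟨haA, hfa⟩ := Finset.mem_filter.mp haF
    refine ⟨?_, a, haA, rfl⟩
    have : a * g * a⁻¹ = a₀ * g * a₀⁻¹ := hfa
    show (a₀⁻¹ * a) * g = g * (a₀⁻¹ * a)
    have h2 : a * g = a₀ * g * a₀⁻¹ * a := by
      rw [← this]; group
    calc (a₀⁻¹ * a) * g = a₀⁻¹ * (a * g) := by group
      _ = a₀⁻¹ * (a₀ * g * a₀⁻¹ * a) := by rw [h2]
      _ = g * (a₀⁻¹ * a) := by group
  have hF2 : F.card ≤ S2.ncard := by
    have := Set.ncard_le_ncard hF'sub hS2fin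
    simpa [hF'card] using this
  exact hcard.trans (Nat.mul_le_mul hB1 hF2)
end
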